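/- Let X be a complete σ-finite measure space and φ an invertible measure-preserving transformation of X whose inverse is also measurable and measure-preserving. Let Γ and Λ be unitary Banach modules over L^∞(X) equipped with L¹(X)-valued norms N_Γ and N_Λ respectively, and let T : Γ → Λ be a bounded linear operator. Then the following are equivalent: (a) T(f•s) = (f∘φ⁻¹)•(T s) for all f ∈ L^∞(X) and s ∈ Γ; (b) N_Λ(T s) ≤ ‖T‖ · (N_Γ(s)∘φ⁻¹) almost everywhere, for every s ∈ Γ; (c) there exists m > 0 such that N_Λ(T s) ≤ m · (N_Γ(s)∘φ⁻¹) almost everywhere, for every s ∈ Γ. -/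

import Mathlib

open MeasureTheory
open scoped ENNReal

noncomputable section

variable {𝕜 : Type*} [RCLike 𝕜] {X : Type*} [MeasurableSpace X] {μ : Measure X}

/-- The constant function `1` as an element of `L^∞(X, 𝕜)`. -/
def oneLinfty (𝕜 : Type*) [RCLike 𝕜] {X : Type*} [MeasurableSpace X] (μ : Measure X) :
    Lp 𝕜 ∞ μ :=
  MemLp.toLp (fun _ => (1 : 𝕜)) (memLp_top_const 1)

/-- Multiplication in `L^∞(X, 𝕜)`. -/
def linftyMul (f g : Lp 𝕜 ∞ μ) : Lp 𝕜 ∞ μ :=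
  MemLp.toLp ((f : X → 𝕜) • (g : X → 𝕜)) ((Lp.memLp g).smul (Lp.memLp f))

/-- The pointwise a.e. modulus `|f| ∈ L^∞(X, ℝ)` of `f ∈ L^∞(X, 𝕜)`. -/
def absLinfty (f : Lp 𝕜 ∞ μ) : Lp ℝ ∞ μ :=
  MemLp.toLp (fun x => ‖f x‖) (Lp.memLp f).norm

/-- The product of a function in `L^∞(X, ℝ)` with a function in `L¹(X, ℝ)`. -/
def linftySmulL1 (f : Lp ℝ ∞ μ) (g : Lp ℝ 1 μ) : Lp ℝ 1 μ :=
  MemLp.toLp ((f : X → ℝ) • (g : X → ℝ)) ((Lp.memLp g).smul (Lp.memLp f))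

/-- A unitary Banach module structure over `L^∞(X, 𝕜)` on a `𝕜`-Banach space `Γ`. -/
structure LinftyModule (𝕜 : Type*) [RCLike 𝕜] {X : Type*} [MeasurableSpace X] (μ : Measure X)
    (Γ : Type*) [NormedAddCommGroup Γ] [NormedSpace 𝕜 Γ] where
  smul : Lp 𝕜 ∞ μ →L[𝕜] Γ →L[𝕜] Γ
  one_smul : ∀ s : Γ, smul (oneLinfty 𝕜 μ) s = s
  mul_smul : ∀ (f g : Lp 𝕜 ∞ μ) (s : Γ), smul (linftyMul f g) s = smul f (smul g s)
  norm_smul_le : ∀ (f : Lp 𝕜 ∞ μ) (s : Γ), ‖smul f s‖ ≤ ‖f‖ * ‖s‖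

variable {Γ : Type*} [NormedAddCommGroup Γ] [NormedSpace 𝕜 Γ]

/-- An `L¹(X)`-valued norm on a Banach module over `L^∞(X, 𝕜)`; inequalities and equalities
in `L¹(X, ℝ)` hold almost everywhere. -/
structure IsL1Norm (M : LinftyModule 𝕜 μ Γ) (N : Γ → Lp ℝ 1 μ) : Prop where
  nonneg : ∀ s : Γ, 0 ≤ N s
  norm_eq : ∀ s : Γ, ‖N s‖ = ‖s‖
  smul_eq : ∀ (f : Lp 𝕜 ∞ μ) (s : Γ), N (M.smul f s) = linftySmulL1 (absLinfty f) (N s)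
  subadd : ∀ s₁ s₂ : Γ, N (s₁ + s₂) ≤ N s₁ + N s₂

namespace KoopmanAux

lemma memℒp_top_ind {A : Set X} (hA : MeasurableSet A) :
    MemLp (A.indicator fun _ => (1 : 𝕜)) ∞ μ :=
  memLp_top_of_bound ((stronglyMeasurable_const.indicator hA).aestronglyMeasurable) 1
    (Filter.Eventually.of_forall fun x => by
      by_cases h : x ∈ A <;> simp [Set.indicator_of_mem, Set.indicator_of_notMem, h])

/-- Indicator function as an element of `L∞`. -/
def indL (𝕜 : Type*) [RCLike 𝕜] {X : Type*} [MeasurableSpace X] (μ : Measure X)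
    (A : Set X) (hA : MeasurableSet A) : Lp 𝕜 ∞ μ :=
  MemLp.toLp (A.indicator fun _ => (1 : 𝕜)) (memℒp_top_ind hA)

lemma coeFn_indL {A : Set X} (hA : MeasurableSet A) :
    ⇑(indL 𝕜 μ A hA) =ᵐ[μ] A.indicator fun _ => (1 : 𝕜) :=
  MemLp.coeFn_toLp _

lemma indL_congr {A A' : Set X} (hA : MeasurableSet A) (hA' : MeasurableSet A')
    (h : A = A') : indL 𝕜 μ A hA = indL 𝕜 μ A' hA' := by subst h; rfl

lemma coeFn_linftySmulL1 (f : Lp ℝ ∞ μ) (g : Lp ℝ 1 μ) :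
    ⇑(linftySmulL1 f g) =ᵐ[μ] fun x => f x * g x :=
  MemLp.coeFn_toLp _

lemma coeFn_absLinfty (f : Lp 𝕜 ∞ μ) :
    ⇑(absLinfty f) =ᵐ[μ] fun x => ‖f x‖ :=
  MemLp.coeFn_toLp _

lemma coeFn_oneLinfty : ⇑(oneLinfty 𝕜 μ) =ᵐ[μ] fun _ => (1 : 𝕜) :=
  MemLp.coeFn_toLp _

lemma coeFn_linftySmulL1_indL {A : Set X} (hA : MeasurableSet A) (g : Lp ℝ 1 μ) :
    ⇑(linftySmulL1 (absLinfty (indL 𝕜 μ A hA)) g) =ᵐ[μ]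
      fun x => A.indicator (fun _ => (1 : ℝ)) x * g x := by
  filter_upwards [coeFn_linftySmulL1 (absLinfty (indL 𝕜 μ A hA)) g,
    coeFn_absLinfty (indL 𝕜 μ A hA), coeFn_indL (𝕜 := 𝕜) (μ := μ) hA] with x e1 e2 e3
  rw [e1, e2, e3]
  by_cases h : x ∈ A <;> simp [h]

lemma norm_L1_nonneg (g : Lp ℝ 1 μ) (hg : 0 ≤ g) : ‖g‖ = ∫ x, g x ∂μ := by
  rw [L1.norm_eq_integral_norm]
  refine integral_congr_ae ?_
  filter_upwards [(Lp.coeFn_nonneg g).2 hg] with x hx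
  simpa [Real.norm_eq_abs] using abs_of_nonneg hx

lemma indL_add_compl {A : Set X} (hA : MeasurableSet A) :
    indL 𝕜 μ A hA + indL 𝕜 μ Aᶜ hA.compl = oneLinfty 𝕜 μ := by
  refine Lp.ext ?_
  filter_upwards [Lp.coeFn_add (indL 𝕜 μ A hA) (indL 𝕜 μ Aᶜ hA.compl),
    coeFn_indL (𝕜 := 𝕜) (μ := μ) hA, coeFn_indL (𝕜 := 𝕜) (μ := μ) hA.compl,
    coeFn_oneLinfty (𝕜 := 𝕜) (μ := μ)] with x e1 e2 e3 e4
  rw [e1, Pi.add_apply, e2, e3, e4]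
  by_cases h : x ∈ A <;> simp [h]

/-- Norm of the action of an indicator function, as a set integral of the `L¹`-valued norm. -/
lemma norm_smul_indL {Γ : Type*} [NormedAddCommGroup Γ] [NormedSpace 𝕜 Γ]
    (M : LinftyModule 𝕜 μ Γ) {N : Γ → Lp ℝ 1 μ} (hN : IsL1Norm M N)
    {A : Set X} (hA : MeasurableSet A) (s : Γ) :
    ‖M.smul (indL 𝕜 μ A hA) s‖ = ∫ x in A, N s x ∂μ := by
  rw [← hN.norm_eq, hN.smul_eq, L1.norm_eq_integral_norm, ← integral_indicator hA]
  refine integral_congr_ae ?_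
  filter_upwards [coeFn_linftySmulL1_indL (𝕜 := 𝕜) hA (N s),
    (Lp.coeFn_nonneg (N s)).2 (hN.nonneg s)] with x e1 e2
  rw [e1]
  by_cases h : x ∈ A
  · simp only [Set.indicator_of_mem h, one_mul]
    exact Real.norm_of_nonneg e2
  · simp [Set.indicator_of_notMem h]

section Koopman
variable (φ : X ≃ᵐ X) (hφi : MeasurePreserving φ.symm μ μ)

lemma compMP_indL {B : Set X} (hB : MeasurableSet B) :
    Lp.compMeasurePreserving φ.symm hφi (indL 𝕜 μ B hB) =
      indL 𝕜 μ (φ.symm ⁻¹' B) (hB.preimage φ.symm.measurable) := by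
  refine Lp.ext ?_
  filter_upwards [Lp.coeFn_compMeasurePreserving (indL 𝕜 μ B hB) hφi,
    hφi.quasiMeasurePreserving.ae_eq (coeFn_indL (𝕜 := 𝕜) (μ := μ) hB),
    coeFn_indL (𝕜 := 𝕜) (μ := μ) (hB.preimage φ.symm.measurable)] with x e1 e2 e3
  rw [e1, e3]
  have h2 : (⇑(indL 𝕜 μ B hB) ∘ φ.symm) x = ((B.indicator fun _ => (1:𝕜)) ∘ φ.symm) x := e2
  rw [h2]
  by_cases h : φ.symm x ∈ B <;>
    simp [Function.comp, Set.indicator_of_mem, Set.indicator_of_notMem, h, Set.mem_preimage]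

lemma compMP_const_smul {E R : Type*} [NormedAddCommGroup E] [NormedField R]
    [NormedSpace R E] {p : ℝ≥0∞} (c : R) (f : Lp E p μ) :
    Lp.compMeasurePreserving φ.symm hφi (c • f) =
      c • Lp.compMeasurePreserving φ.symm hφi f := by
  refine Lp.ext ?_
  filter_upwards [Lp.coeFn_compMeasurePreserving (c • f) hφi,
    hφi.quasiMeasurePreserving.ae_eq (Lp.coeFn_smul c f),
    Lp.coeFn_smul c (Lp.compMeasurePreserving φ.symm hφi f),
    Lp.coeFn_compMeasurePreserving f hφi]
      with x e1 e2 e3 e4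
  rw [e1, e3]
  have h2 : (⇑(c • f) ∘ φ.symm) x = ((c • ⇑f) ∘ φ.symm) x := e2
  rw [h2, Pi.smul_apply, e4]
  simp [Function.comp]

lemma compMP_nonneg (g : Lp ℝ 1 μ) (hg : 0 ≤ g) :
    0 ≤ Lp.compMeasurePreserving φ.symm hφi g := by
  rw [← Lp.coeFn_nonneg]
  filter_upwards [Lp.coeFn_compMeasurePreserving g hφi,
    hφi.quasiMeasurePreserving.ae ((Lp.coeFn_nonneg g).2 hg)] with x e1 e2
  rw [Pi.zero_apply] at *
  rw [e1]
  exact e2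

end Koopman

/-- pick the first element of the list at distance `< ε`. -/
def pickNet (ε : ℝ) : List 𝕜 → 𝕜 → 𝕜
  | [], _ => 0
  | c :: l, x => if dist x c < ε then c else pickNet ε l x

lemma pickNet_mem (ε : ℝ) (l : List 𝕜) (x : 𝕜) : pickNet ε l x ∈ (0 :: l : List 𝕜) := by
  induction l with
  | nil => simp [pickNet]
  | cons c l ih =>
      rw [pickNet]
      split
      · simp
      · rcases List.mem_cons.1 ih with h | h
        · simp [h]
        · simp [h]

lemma pickNet_dist (ε : ℝ) (l : List 𝕜) (x : 𝕜) (hx : ∃ c ∈ l, dist x c < ε) :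
    dist x (pickNet ε l x) < ε := by
  induction l with
  | nil => simp at hx
  | cons c l ih =>
      rw [pickNet]
      split_ifs with h
      · exact h
      · rcases hx with ⟨c', hc', hd⟩
        rcases List.mem_cons.1 hc' with rfl | hc'
        · exact absurd hd h
        · exact ih ⟨c', hc', hd⟩

lemma pickNet_measurable [MeasurableSpace 𝕜] [BorelSpace 𝕜] (ε : ℝ) (l : List 𝕜) :
    Measurable (pickNet ε l : 𝕜 → 𝕜) := by
  induction l with
  | nil => simp only [pickNet]; exact measurable_const
  | cons c l ih =>
      have : Measurable fun x : 𝕜 => if dist x c < ε then c else pickNet ε l x :=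
        Measurable.ite (measurableSet_ball) measurable_const ih
      simpa [pickNet] using this

lemma norm_Linfty_le_of_ae {E : Type*} [NormedAddCommGroup E] (f : Lp E ∞ μ) {C : ℝ}
    (hC : 0 ≤ C) (h : ∀ᵐ x ∂μ, ‖f x‖ ≤ C) : ‖f‖ ≤ C := by
  rw [Lp.norm_def]
  refine ENNReal.toReal_le_of_le_ofReal hC ?_
  have := eLpNorm_le_of_ae_bound (μ := μ) (p := (∞ : ℝ≥0∞)) h
  simpa using this

lemma ae_norm_le_norm_Linfty {E : Type*} [NormedAddCommGroup E] (f : Lp E ∞ μ) :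
    ∀ᵐ x ∂μ, ‖f x‖ ≤ ‖f‖ := by
  filter_upwards [ae_le_eLpNormEssSup (μ := μ) (f := ⇑f)] with x hx
  rw [Lp.norm_def, eLpNorm_exponent_top]
  have h2 : eLpNormEssSup (⇑f) μ ≠ ∞ := by
    rw [← eLpNorm_exponent_top]; exact Lp.eLpNorm_ne_top f
  calc ‖f x‖ = ((‖f x‖₊ : ℝ≥0∞)).toReal := by simp
    _ ≤ (eLpNormEssSup (⇑f) μ).toReal := ENNReal.toReal_mono h2 (by exact_mod_cast hx)

lemma coeFn_lp_sum {ι : Type*} {E : Type*} [NormedAddCommGroup E] {p : ℝ≥0∞}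
    (F : Finset ι) (u : ι → Lp E p μ) :
    ⇑(∑ i ∈ F, u i) =ᵐ[μ] fun x => ∑ i ∈ F, u i x := by
  classical
  induction F using Finset.induction_on with
  | empty =>
      rw [Finset.sum_empty]
      filter_upwards [Lp.coeFn_zero E p μ] with x hx
      simpa using hx
  | @insert a s hni ih =>
      rw [Finset.sum_insert hni]
      filter_upwards [Lp.coeFn_add (u a) (∑ i ∈ s, u i), ih] with x e1 e2
      rw [e1, Pi.add_apply, e2]
      simp [Finset.sum_insert hni]

end KoopmanAux


set_option maxHeartbeats 1000000 in
/-- For `L¹(X)`-normed modules over `L^∞(X)` of a complete σ-finite measure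
space and an invertible measure-preserving transformation `φ`, an operator `T` intertwines the
module actions along the Koopman operator `f ↦ f ∘ φ⁻¹` iff its vector-valued norm is
dominated: `N_Λ(Ts) ≤ ‖T‖ ⬝ (N_Γ(s) ∘ φ⁻¹)` a.e., iff such a domination holds for some
constant `m > 0`. -/
theorem koopman_L1normed_tfae
    [SigmaFinite μ] (hμ : μ.IsComplete)
    {Λ : Type*} [NormedAddCommGroup Λ] [NormedSpace 𝕜 Λ]
    [CompleteSpace Γ] [CompleteSpace Λ]
    (φ : X ≃ᵐ X) (hφ : MeasurePreserving φ μ μ) (hφi : MeasurePreserving φ.symm μ μ)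
    (M : LinftyModule 𝕜 μ Γ) (Mₗ : LinftyModule 𝕜 μ Λ)
    (NΓ : Γ → Lp ℝ 1 μ) (hNΓ : IsL1Norm M NΓ)
    (NΛ : Λ → Lp ℝ 1 μ) (hNΛ : IsL1Norm Mₗ NΛ)
    (T : Γ →L[𝕜] Λ) :
    List.TFAE
      [∀ (f : Lp 𝕜 ∞ μ) (s : Γ),
          T (M.smul f s) = Mₗ.smul (Lp.compMeasurePreserving φ.symm hφi f) (T s),
       ∀ s : Γ, NΛ (T s) ≤ ‖T‖ • Lp.compMeasurePreserving φ.symm hφi (NΓ s),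
       ∃ m : ℝ, 0 < m ∧
          ∀ s : Γ, NΛ (T s) ≤ m • Lp.compMeasurePreserving φ.symm hφi (NΓ s)] := by
  classical
  open KoopmanAux in
  tfae_have 1 → 2 := by
    intro h1 s
    set v := Lp.compMeasurePreserving φ.symm hφi (NΓ s) with hv
    rw [← Lp.coeFn_le]
    have hsets : ∀ A : Set X, MeasurableSet A → μ A < ∞ →
        ∫ x in A, NΛ (T s) x ∂μ ≤ ∫ x in A, (‖T‖ • v) x ∂μ := by
      intro A hA _
      have hB : MeasurableSet (φ ⁻¹' A) := hA.preimage φ.measurable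
      have hAB : φ.symm ⁻¹' (φ ⁻¹' A) = A := by
        ext x; simp
      have e0 : Mₗ.smul (indL 𝕜 μ A hA) (T s)
          = T (M.smul (indL 𝕜 μ (φ ⁻¹' A) hB) s) := by
        rw [h1, compMP_indL φ hφi hB, indL_congr _ hA hAB]
      have eL : ∫ x in A, NΛ (T s) x ∂μ
          = ‖T (M.smul (indL 𝕜 μ (φ ⁻¹' A) hB) s)‖ := by
        rw [← e0, norm_smul_indL Mₗ hNΛ hA (T s)]
      have eR : ∫ x in A, (‖T‖ • v) x ∂μ = ‖T‖ * ∫ x in A, v x ∂μ := by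
        calc ∫ x in A, (‖T‖ • v) x ∂μ = ∫ x in A, ‖T‖ * v x ∂μ := by
              refine integral_congr_ae (ae_restrict_of_ae ?_)
              filter_upwards [Lp.coeFn_smul ‖T‖ v] with x e
              rw [e]; simp
          _ = ‖T‖ * ∫ x in A, v x ∂μ := integral_const_mul _ _
      have ecv : ∫ x in A, v x ∂μ = ∫ x in φ ⁻¹' A, NΓ s x ∂μ := by
        have h1' : ∫ x in A, v x ∂μ = ∫ x in A, (NΓ s) (φ.symm x) ∂μ := by
          refine integral_congr_ae (ae_restrict_of_ae ?_)
          filter_upwards [Lp.coeFn_compMeasurePreserving (NΓ s) hφi] with x e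
          exact e
        rw [h1']
        conv_lhs => rw [← hAB]
        exact hφi.setIntegral_preimage_emb φ.symm.measurableEmbedding (⇑(NΓ s)) (φ ⁻¹' A)
      rw [eL, eR, ecv, ← norm_smul_indL M hNΓ hB s]
      exact T.le_opNorm _
    have hae := ae_le_of_forall_setIntegral_le (L1.integrable_coeFn (NΛ (T s)))
      (L1.integrable_coeFn (‖T‖ • v)) hsets
    exact hae
  tfae_have 2 → 3 := by
    intro h2
    refine ⟨‖T‖ + 1, by positivity, fun s => (h2 s).trans ?_⟩
    set v := Lp.compMeasurePreserving φ.symm hφi (NΓ s) with hv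
    have hvpos : 0 ≤ v := KoopmanAux.compMP_nonneg φ hφi _ (hNΓ.nonneg s)
    rw [← Lp.coeFn_le]
    filter_upwards [Lp.coeFn_smul ‖T‖ v, Lp.coeFn_smul (‖T‖ + 1) v,
      (Lp.coeFn_nonneg v).2 hvpos] with x e1 e2 e3
    rw [e1, e2, Pi.smul_apply, Pi.smul_apply, smul_eq_mul, smul_eq_mul]
    exact mul_le_mul_of_nonneg_right (by linarith) e3
  tfae_have 3 → 1 := by
    rintro ⟨m, hm, hdom⟩ f s
    -- zero detection
    have vz : ∀ w : Λ, NΛ w = 0 → w = 0 := fun w h =>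
      norm_eq_zero.1 (by rw [← hNΛ.norm_eq, h, norm_zero])
    -- locality
    have loc : ∀ (B : Set X) (hB : MeasurableSet B) (u : Γ),
        Mₗ.smul (indL 𝕜 μ (φ.symm ⁻¹' B)ᶜ ((hB.preimage φ.symm.measurable).compl))
          (T (M.smul (indL 𝕜 μ B hB) u)) = 0 := by
      intro B hB u
      set u' := M.smul (indL 𝕜 μ B hB) u with hu'
      apply vz
      rw [hNΛ.smul_eq]
      refine Lp.ext ?_
      have hNu' : ⇑(NΓ u') =ᵐ[μ] fun x => B.indicator (fun _ => (1:ℝ)) x * NΓ u x := by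
        rw [hu', hNΓ.smul_eq]
        exact coeFn_linftySmulL1_indL hB (NΓ u)
      filter_upwards [coeFn_linftySmulL1_indL (𝕜 := 𝕜) ((hB.preimage φ.symm.measurable).compl) (NΛ (T u')),
        (Lp.coeFn_nonneg (NΛ (T u'))).2 (hNΛ.nonneg (T u')),
        (Lp.coeFn_le _ _).2 (hdom u'),
        Lp.coeFn_smul m (Lp.compMeasurePreserving φ.symm hφi (NΓ u')),
        Lp.coeFn_compMeasurePreserving (NΓ u') hφi,
        hφi.quasiMeasurePreserving.ae_eq hNu',
        Lp.coeFn_zero ℝ 1 μ] with x e1 e2 e3 e4 e5 e6 e7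
      rw [e1, e7, Pi.zero_apply]
      by_cases h : φ.symm x ∈ B
      · have : x ∉ (φ.symm ⁻¹' B)ᶜ := by simp [h]
        simp [Set.indicator_of_notMem this]
      · have hx : x ∈ (φ.symm ⁻¹' B)ᶜ := by simp [h]
        rw [Set.indicator_of_mem hx, one_mul]
        have hle : NΛ (T u') x ≤ m * (NΓ u') (φ.symm x) := by
          have := e3.trans_eq e4
          rw [Pi.smul_apply, smul_eq_mul, e5] at this
          exact this
        have h6 : (⇑(NΓ u') ∘ φ.symm) x
            = ((fun x => B.indicator (fun _ => (1:ℝ)) x * NΓ u x) ∘ φ.symm) x := e6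
        simp only [Function.comp_apply, Set.indicator_of_notMem h, zero_mul] at h6
        have hz : NΛ (T u') x ≤ 0 := by
          calc NΛ (T u') x ≤ m * (NΓ u') (φ.symm x) := hle
            _ = 0 := by rw [h6, mul_zero]
        simp only [Pi.zero_apply] at e2
        linarith
    -- the indicator case
    have claimInd : ∀ (B : Set X) (hB : MeasurableSet B) (u : Γ),
        T (M.smul (indL 𝕜 μ B hB) u) =
          Mₗ.smul (indL 𝕜 μ (φ.symm ⁻¹' B) (hB.preimage φ.symm.measurable)) (T u) := by
      intro B hB u
      have hC : MeasurableSet (φ.symm ⁻¹' B) := hB.preimage φ.symm.measurable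
      have hsplit : u = M.smul (indL 𝕜 μ B hB) u + M.smul (indL 𝕜 μ Bᶜ hB.compl) u := by
        conv_lhs => rw [← M.one_smul u, ← indL_add_compl hB]
        rw [map_add, ContinuousLinearMap.add_apply]
      have step1 : T (M.smul (indL 𝕜 μ B hB) u) =
          Mₗ.smul (indL 𝕜 μ (φ.symm ⁻¹' B) hC) (T (M.smul (indL 𝕜 μ B hB) u)) := by
        conv_lhs => rw [← Mₗ.one_smul (T (M.smul (indL 𝕜 μ B hB) u)), ← indL_add_compl hC]
        rw [map_add, ContinuousLinearMap.add_apply, loc B hB u, add_zero]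
      have step2 : Mₗ.smul (indL 𝕜 μ (φ.symm ⁻¹' B) hC)
          (T (M.smul (indL 𝕜 μ Bᶜ hB.compl) u)) = 0 := by
        have h0 := loc Bᶜ hB.compl u
        rwa [indL_congr _ hC (by simp [Set.preimage_compl])] at h0
      calc T (M.smul (indL 𝕜 μ B hB) u)
          = Mₗ.smul (indL 𝕜 μ (φ.symm ⁻¹' B) hC) (T (M.smul (indL 𝕜 μ B hB) u)) := step1
        _ = Mₗ.smul (indL 𝕜 μ (φ.symm ⁻¹' B) hC) (T (M.smul (indL 𝕜 μ B hB) u))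
            + Mₗ.smul (indL 𝕜 μ (φ.symm ⁻¹' B) hC) (T (M.smul (indL 𝕜 μ Bᶜ hB.compl) u)) := by
            rw [step2, add_zero]
        _ = Mₗ.smul (indL 𝕜 μ (φ.symm ⁻¹' B) hC)
            (T (M.smul (indL 𝕜 μ B hB) u + M.smul (indL 𝕜 μ Bᶜ hB.compl) u)) := by
            rw [← map_add, map_add T]
        _ = Mₗ.smul (indL 𝕜 μ (φ.symm ⁻¹' B) hC) (T u) := by rw [← hsplit]
    -- the set of functions for which the intertwining identity holds
    set Sset : Set (Lp 𝕜 ∞ μ) :=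
      {g | T (M.smul g s) = Mₗ.smul (Lp.compMeasurePreserving φ.symm hφi g) (T s)} with hSset
    have hmem0 : (0 : Lp 𝕜 ∞ μ) ∈ Sset := by
      simp only [hSset, Set.mem_setOf_eq, map_zero, ContinuousLinearMap.zero_apply]
    have hmemAdd : ∀ a b : Lp 𝕜 ∞ μ, a ∈ Sset → b ∈ Sset → a + b ∈ Sset := by
      intro a b ha hb
      simp only [hSset, Set.mem_setOf_eq, map_add, ContinuousLinearMap.add_apply] at *
      rw [ha, hb]
    have hmemSmul : ∀ (c : 𝕜) (a : Lp 𝕜 ∞ μ), a ∈ Sset → c • a ∈ Sset := by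
      intro c a ha
      simp only [hSset, Set.mem_setOf_eq] at *
      rw [_root_.map_smul, ContinuousLinearMap.smul_apply, _root_.map_smul,
        KoopmanAux.compMP_const_smul φ hφi, _root_.map_smul, ContinuousLinearMap.smul_apply, ha]
    have hmemInd : ∀ (B : Set X) (hB : MeasurableSet B), indL 𝕜 μ B hB ∈ Sset := by
      intro B hB
      simp only [hSset, Set.mem_setOf_eq]
      rw [KoopmanAux.compMP_indL φ hφi hB]
      exact claimInd B hB s
    -- Sset is closed
    haveI : Fact ((1 : ℝ≥0∞) ≤ ∞) := ⟨le_top⟩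
    have hSc : IsClosed Sset := by
      have c1 : Continuous fun g : Lp 𝕜 ∞ μ => T (M.smul g s) :=
        T.continuous.comp ((M.smul.flip s).continuous)
      have cK : Continuous fun g : Lp 𝕜 ∞ μ => Lp.compMeasurePreserving φ.symm hφi g :=
        (Lp.isometry_compMeasurePreserving hφi).continuous
      have c2 : Continuous fun g : Lp 𝕜 ∞ μ =>
          Mₗ.smul (Lp.compMeasurePreserving φ.symm hφi g) (T s) :=
        ((Mₗ.smul.flip (T s)).continuous).comp cK
      exact isClosed_eq c1 c2
    -- density argument
    suffices hcl : f ∈ closure Sset by rwa [hSc.closure_eq] at hcl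
    rw [Metric.mem_closure_iff]
    intro ε hε
    borelize 𝕜
    set R : ℝ := ‖f‖ + 1 with hR
    have hR0 : (0:ℝ) ≤ R := by positivity
    set h := (Lp.aestronglyMeasurable f).mk f with hh
    have hmeas : StronglyMeasurable h := (Lp.aestronglyMeasurable f).stronglyMeasurable_mk
    have hfh : ⇑f =ᵐ[μ] h := (Lp.aestronglyMeasurable f).ae_eq_mk
    set h' : X → 𝕜 := fun x => if ‖h x‖ ≤ R then h x else 0 with hh'
    have h'meas : Measurable h' :=
      Measurable.ite (measurableSet_le hmeas.measurable.norm measurable_const)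
        hmeas.measurable measurable_const
    have hfh' : ⇑f =ᵐ[μ] h' := by
      filter_upwards [hfh, KoopmanAux.ae_norm_le_norm_Linfty f] with x e1 e2
      have : ‖h x‖ ≤ R := by rw [← e1]; linarith
      simp only [hh']; rw [if_pos this]; exact e1
    have hh'bound : ∀ x, ‖h' x‖ ≤ R := by
      intro x
      simp only [hh']
      split_ifs with hb
      · exact hb
      · simpa using hR0
    -- finite net
    have htb : TotallyBounded (Metric.closedBall (0:𝕜) R) :=
      (isCompact_closedBall _ _).totallyBounded
    obtain ⟨t, htf, hcov⟩ := Metric.totallyBounded_iff.1 htb (ε / 2) (half_pos hε)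
    set l : List 𝕜 := htf.toFinset.toList with hl
    have hmem_l : ∀ c ∈ t, c ∈ l := by
      intro c hc
      rw [hl, Finset.mem_toList, Set.Finite.mem_toFinset]
      exact hc
    set g : X → 𝕜 := fun x => KoopmanAux.pickNet (ε / 2) l (h' x) with hg
    have gmeas : Measurable g := (KoopmanAux.pickNet_measurable (ε / 2) l).comp h'meas
    have hgd : ∀ x, dist (h' x) (g x) < ε / 2 := by
      intro x
      refine KoopmanAux.pickNet_dist _ _ _ ?_
      have hx : h' x ∈ Metric.closedBall (0:𝕜) R := by
        rw [Metric.mem_closedBall, dist_zero_right]; exact hh'bound x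
      obtain ⟨c, hct, hc⟩ := Set.mem_iUnion₂.1 (hcov hx)
      exact ⟨c, hmem_l c hct, Metric.mem_ball.1 hc⟩
    have gbound : ∀ x, ‖g x‖ ≤ R + ε := by
      intro x
      have : ‖g x‖ ≤ ‖h' x‖ + dist (h' x) (g x) := by
        rw [dist_eq_norm]
        calc ‖g x‖ = ‖h' x - (h' x - g x)‖ := by ring_nf
          _ ≤ ‖h' x‖ + ‖h' x - g x‖ := norm_sub_le _ _
      have := this.trans (add_le_add (hh'bound x) (hgd x).le)
      linarith
    have gsm : StronglyMeasurable g := gmeas.stronglyMeasurable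
    have gmem : MemLp g ∞ μ :=
      memLp_top_of_bound gsm.aestronglyMeasurable (R + ε)
        (Filter.Eventually.of_forall gbound)
    set G : Lp 𝕜 ∞ μ := gmem.toLp g with hG
    refine ⟨G, ?_, ?_⟩
    · -- G ∈ Sset via finite sum of indicators
      set F : Finset 𝕜 := ((0 : 𝕜) :: l).toFinset with hF
      have hgF : ∀ x, g x ∈ F := by
        intro x
        rw [hF, List.mem_toFinset]
        exact KoopmanAux.pickNet_mem _ _ _
      have hGsum : G = ∑ c ∈ F, c • indL 𝕜 μ (g ⁻¹' {c}) (gmeas (measurableSet_singleton c)) := by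
        refine Lp.ext ?_
        have hterms : ∀ᵐ x ∂μ, ∀ c ∈ (F : Set 𝕜),
            (c • indL 𝕜 μ (g ⁻¹' {c}) (gmeas (measurableSet_singleton c))) x
              = c * (g ⁻¹' {c}).indicator (fun _ => (1:𝕜)) x := by
          rw [ae_ball_iff F.countable_toSet]
          intro c _
          filter_upwards [Lp.coeFn_smul c (indL 𝕜 μ (g ⁻¹' {c}) (gmeas (measurableSet_singleton c))),
            coeFn_indL (𝕜 := 𝕜) (μ := μ) (gmeas (measurableSet_singleton c))] with x e1 e2
          rw [e1, Pi.smul_apply, e2, smul_eq_mul]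
        filter_upwards [gmem.coeFn_toLp,
          KoopmanAux.coeFn_lp_sum F
            (fun c => c • indL 𝕜 μ (g ⁻¹' {c}) (gmeas (measurableSet_singleton c))),
          hterms] with x e0 e1 e2
        rw [e0, e1]
        have : ∀ c ∈ F, (c • indL 𝕜 μ (g ⁻¹' {c}) (gmeas (measurableSet_singleton c))) x
            = c * (g ⁻¹' {c}).indicator (fun _ => (1:𝕜)) x := fun c hc => e2 c hc
        rw [Finset.sum_congr rfl this]
        have hind : ∀ c : 𝕜, (g ⁻¹' {c}).indicator (fun _ => (1:𝕜)) x
            = if g x = c then 1 else 0 := by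
          intro c
          by_cases hxc : g x = c
          · simp [Set.indicator_of_mem, hxc]
          · simp [Set.indicator_of_notMem, hxc]
        calc g x = ∑ c ∈ F, if g x = c then c else 0 := by
              rw [Finset.sum_ite_eq, if_pos (hgF x)]
          _ = ∑ c ∈ F, c * (g ⁻¹' {c}).indicator (fun _ => (1:𝕜)) x := by
              refine Finset.sum_congr rfl fun c _ => ?_
              rw [hind c, mul_ite, mul_one, mul_zero]
      rw [hGsum]
      exact Finset.sum_induction _ (· ∈ Sset) hmemAdd hmem0
        (fun c _ => hmemSmul c _ (hmemInd _ _))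
    · -- dist f G < ε
      have : dist f G ≤ ε / 2 := by
        rw [Lp.dist_def]
        have hsub : ∀ᵐ x ∂μ, ‖(⇑f - ⇑G) x‖ ≤ ε / 2 := by
          filter_upwards [hfh', gmem.coeFn_toLp] with x e1 e2
          rw [Pi.sub_apply, e1, e2, ← dist_eq_norm]
          exact (hgd x).le
        have hle := eLpNorm_le_of_ae_bound (μ := μ) (p := (∞ : ℝ≥0∞)) hsub
        simp only [ENNReal.toReal_top, inv_zero, ENNReal.rpow_zero, one_mul] at hle
        exact ENNReal.toReal_le_of_le_ofReal (by positivity) hle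
      linarith
  tfae_finish

end
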